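/- In the slab setting, let q₁ ≤ q₁^κ ≤ q₂^κ ≤ q₂ and q₁ ≤ q₁^λ ≤ q₂^λ ≤ q₂. If rₓ(q₁^κ, q₂^κ) ≤ rₓ(q₁^λ, q₂^λ) and q₂^κ ≥ q₂^λ, then r_y(q₁^κ, q₂^κ) ≤ r_y(q₁^λ, q₂^λ). -/

import Mathlib

open MeasureTheory ProbabilityTheory Real Filter

/-- The standard normal cumulative distribution function Φ. -/
noncomputable def Phi (t : ℝ) : ℝ := (gaussianReal 0 1 (Set.Iic t)).toReal

/-- The inverse Φ⁻¹ of the standard normal CDF (meaningful on (0,1)). -/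
noncomputable def PhiInv : ℝ → ℝ := Function.invFun Phi

/-- The Gaussian measure N(m, σ²I) on ℝ^d. -/
noncomputable def gaussianVec {d : ℕ} (m : Fin d → ℝ) (σ : ℝ) :
    Measure (Fin d → ℝ) :=
  Measure.pi fun i => gaussianReal (m i) (Real.toNNReal (σ ^ 2))

/-- Dot product on ℝ^d. -/
def dotp {d : ℕ} (a b : Fin d → ℝ) : ℝ := ∑ i, a i * b i

/-- Euclidean (ℓ₂) norm on ℝ^d. -/
noncomputable def l2norm {d : ℕ} (a : Fin d → ℝ) : ℝ := Real.sqrt (∑ i, a i ^ 2)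

/-- Φ⁻¹ extended to EReal with the conventions Φ⁻¹(0) = −∞, Φ⁻¹(1) = +∞. -/
noncomputable def PhiInvE (p : ℝ) : EReal :=
  if p ≤ 0 then ⊥ else if 1 ≤ p then ⊤ else ((PhiInv p : ℝ) : EReal)

/-- Φ extended to EReal with Φ(−∞) = 0 and Φ(+∞) = 1. -/
noncomputable def PhiE (e : EReal) : ℝ :=
  if e = ⊥ then 0 else if e = ⊤ then 1 else Phi e.toReal

/-- The slab C(a,b) = {z : σ‖δ‖₂ Φ⁻¹(1−b) < δᵀ(z−x) ≤ σ‖δ‖₂ Φ⁻¹(1−a)},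
with the conventions Φ⁻¹(0) = −∞ and Φ⁻¹(1) = +∞ (assuming σ‖δ‖₂ > 0, the
defining inequalities are stated for the normalized quantity δᵀ(z−x)/(σ‖δ‖₂)). -/
noncomputable def slab {d : ℕ} (σ : ℝ) (x δ : Fin d → ℝ) (a b : ℝ) :
    Set (Fin d → ℝ) :=
  {z | PhiInvE (1 - b) < ((dotp δ (z - x) / (σ * l2norm δ) : ℝ) : EReal) ∧
      ((dotp δ (z - x) / (σ * l2norm δ) : ℝ) : EReal) ≤ PhiInvE (1 - a)}

open scoped ENNReal NNReal

/-! The likelihood ratio of `N(x + δ, σ²I)` against `N(x, σ²I)` at `z` is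
`exp ((2 δᵀ(z - x) - ‖δ‖²) / (2σ²))`, increasing in `δᵀ(z - x)`. Let `A = C′ ∩ C(q₁ᵏ, q₂ᵏ)` and
`B = C′ ∩ C(q₁ˡ, q₂ˡ)`. As `q₂ˡ ≤ q₂ᵏ`, the lower face of `C(q₁ˡ, q₂ˡ)` lies above that of
`C(q₁ᵏ, q₂ᵏ)`, so every point of `B \ A` lies strictly above every point of `A \ B` in the
direction `δ`. Hence some constant `K` bounds the ratio from above on `A \ B` and from below on
`B \ A`, and `Pr(Y ∈ A \ B) ≤ K Pr(X ∈ A \ B) ≤ K Pr(X ∈ B \ A) ≤ Pr(Y ∈ B \ A)`. -/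

lemma Phi_sub_Phi (a b : ℝ) : Phi b - Phi a = ∫ t in a..b, gaussianPDFReal 0 1 t := by
  have hPhi : ∀ t, Phi t = ∫ s in Set.Iic t, gaussianPDFReal 0 1 s := fun t => by
    rw [Phi, gaussianReal_apply_eq_integral 0 one_ne_zero,
      ENNReal.toReal_ofReal (integral_nonneg fun _ => gaussianPDFReal_nonneg _ _ _)]
  rw [hPhi, hPhi]
  exact intervalIntegral.integral_Iic_sub_Iic (integrable_gaussianPDFReal 0 1).integrableOn
    (integrable_gaussianPDFReal 0 1).integrableOn

lemma strictMono_Phi : StrictMono Phi := fun a b hab => by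
  have h := intervalIntegral.intervalIntegral_pos_of_pos
    (integrable_gaussianPDFReal 0 1).intervalIntegrable
    (fun t => gaussianPDFReal_pos 0 1 t one_ne_zero) hab
  linarith [Phi_sub_Phi a b]

lemma continuous_Phi : Continuous Phi := by
  have h : Phi = fun t => Phi 0 + ∫ s in (0 : ℝ)..t, gaussianPDFReal 0 1 s := by
    funext t
    rw [← Phi_sub_Phi]
    ring
  rw [h]
  exact continuous_const.add ((integrable_gaussianPDFReal 0 1).continuous_primitive 0)

lemma Phi_PhiInv {p : ℝ} (h0 : 0 < p) (h1 : p < 1) : Phi (PhiInv p) = p := by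
  have hcdf : Phi = cdf (gaussianReal 0 1) := funext fun t => (cdf_eq_real _ t).symm
  obtain ⟨a, ha⟩ := ((hcdf ▸ tendsto_cdf_atBot _).eventually_lt_const h0).exists
  obtain ⟨b, hb⟩ := ((hcdf ▸ tendsto_cdf_atTop _).eventually_const_lt h1).exists
  exact Function.invFun_eq (intermediate_value_univ a b continuous_Phi ⟨ha.le, hb.le⟩)

lemma monotoneOn_PhiInv : MonotoneOn PhiInv (Set.Ioo 0 1) := fun p hp q hq hpq => by
  rwa [← strictMono_Phi.le_iff_le, Phi_PhiInv hp.1 hp.2, Phi_PhiInv hq.1 hq.2]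

lemma monotone_PhiInvE : Monotone PhiInvE := by
  intro p q hpq
  unfold PhiInvE
  split_ifs <;> first
    | exact bot_le | exact le_top | exact le_rfl | (exfalso; linarith)
    | exact EReal.coe_le_coe_iff.2 <|
        monotoneOn_PhiInv ⟨by linarith, by linarith⟩ ⟨by linarith, by linarith⟩ hpq

lemma lintegral_fintype_prod_eq_prod {ι : Type*} [Fintype ι] {α : ι → Type*}
    [∀ i, MeasurableSpace (α i)] (μ : ∀ i, Measure (α i)) [∀ i, IsProbabilityMeasure (μ i)]
    {f : ∀ i, α i → ℝ≥0∞} (hf : ∀ i, Measurable (f i)) :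
    ∫⁻ z, ∏ i, f i (z i) ∂Measure.pi μ = ∏ i, ∫⁻ t, f i t ∂μ i := by
  rw [lintegral_prod_eq_prod_lintegral_of_indepFun _ _
    (iIndepFun_pi (μ := μ) fun i => (hf i).aemeasurable)
    fun i => (hf i).comp (measurable_pi_apply i)]
  exact Finset.prod_congr rfl fun i _ => (measurePreserving_eval μ i).lintegral_comp (hf i)

lemma pi_eq_withDensity_prod {ι : Type*} [Fintype ι] {α : ι → Type*}
    [∀ i, MeasurableSpace (α i)] (μ : ∀ i, Measure (α i)) [∀ i, IsProbabilityMeasure (μ i)]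
    (ν : ∀ i, Measure (α i)) [∀ i, SigmaFinite (ν i)]
    {f : ∀ i, α i → ℝ≥0∞} (hf : ∀ i, Measurable (f i))
    (hν : ∀ i, ν i = (μ i).withDensity (f i)) :
    Measure.pi ν = (Measure.pi μ).withDensity fun z => ∏ i, f i (z i) := by
  refine Measure.pi_eq fun s hs => ?_
  have hbox : (Set.univ.pi s).indicator (fun z => ∏ i, f i (z i))
      = fun z => ∏ i, (s i).indicator (f i) (z i) := by
    funext z
    classical
    simp [Set.indicator, Finset.prod_ite_zero]
  rw [withDensity_apply _ (.univ_pi hs), ← lintegral_indicator (.univ_pi hs), hbox,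
    lintegral_fintype_prod_eq_prod μ fun i => (hf i).indicator (hs i)]
  exact Finset.prod_congr rfl fun i _ => by
    rw [lintegral_indicator (hs i), hν i, withDensity_apply _ (hs i)]

lemma gaussianReal_add_eq_withDensity (m c : ℝ) {v : ℝ≥0} (hv : v ≠ 0) :
    gaussianReal (m + c) v = (gaussianReal m v).withDensity
      fun t => ENNReal.ofReal (exp ((2 * c * (t - m) - c ^ 2) / (2 * v))) := by
  rw [gaussianReal_of_var_ne_zero _ hv, gaussianReal_of_var_ne_zero _ hv,
    ← withDensity_mul _ (measurable_gaussianPDF _ _) (by fun_prop)]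
  congr 1
  funext t
  rw [Pi.mul_apply, gaussianPDF, gaussianPDF,
    ← ENNReal.ofReal_mul (gaussianPDFReal_nonneg _ _ _), gaussianPDFReal, gaussianPDFReal,
    mul_assoc _ (rexp _), ← exp_add]
  congr 3
  have : (v : ℝ) ≠ 0 := by exact_mod_cast hv
  field_simp
  ring

instance isProbabilityMeasure_gaussianVec {d : ℕ} (m : Fin d → ℝ) (σ : ℝ) :
    IsProbabilityMeasure (gaussianVec m σ) := by
  rw [gaussianVec]
  infer_instance

lemma gaussianVec_add_eq_withDensity {d : ℕ} (x δ : Fin d → ℝ) {σ : ℝ} (hσ : 0 < σ) :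
    gaussianVec (x + δ) σ = (gaussianVec x σ).withDensity
      fun z => ENNReal.ofReal (exp ((2 * dotp δ (z - x) - dotp δ δ) / (2 * σ ^ 2))) := by
  have hv : (σ ^ 2).toNNReal ≠ 0 := by simpa using hσ.ne'
  simp only [gaussianVec, Pi.add_apply]
  rw [pi_eq_withDensity_prod _ _ (fun i => by fun_prop)
    fun i => gaussianReal_add_eq_withDensity (x i) (δ i) hv]
  congr 1
  funext z
  rw [← ENNReal.ofReal_prod_of_nonneg fun i _ => (exp_pos _).le, ← exp_sum, ← Finset.sum_div,
    Real.coe_toNNReal _ (sq_nonneg σ)]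
  simp only [dotp, Pi.sub_apply, Finset.sum_sub_distrib, Finset.mul_sum, sq, mul_assoc]

lemma measure_le_measure_iff_diff_le_diff {α : Type*} [MeasurableSpace α] {μ : Measure α}
    {A B : Set α} (hA : MeasurableSet A) (hB : MeasurableSet B) (h : μ (A ∩ B) ≠ ∞) :
    μ A ≤ μ B ↔ μ (A \ B) ≤ μ (B \ A) := by
  rw [← measure_inter_add_sdiff A hB, ← measure_inter_add_sdiff B hA, Set.inter_comm B A]
  exact ENNReal.add_le_add_iff_left h

lemma withDensity_apply_le_of_separated {α : Type*} [MeasurableSpace α] {μ : Measure α}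
    [IsFiniteMeasure μ] {f : α → ℝ≥0∞} {A B : Set α} (hA : MeasurableSet A)
    (hB : MeasurableSet B) (hμ : μ A ≤ μ B) (hf : ∀ a ∈ A \ B, ∀ b ∈ B \ A, f a ≤ f b) :
    μ.withDensity f A ≤ μ.withDensity f B := by
  set K := ⨆ a ∈ A \ B, f a
  have hdiff : μ (A \ B) ≤ μ (B \ A) :=
    (measure_le_measure_iff_diff_le_diff hA hB (measure_ne_top _ _)).1 hμ
  have key : μ.withDensity f (A \ B) ≤ μ.withDensity f (B \ A) := calc
    _ = ∫⁻ a in A \ B, f a ∂μ := withDensity_apply _ (hA.diff hB)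
    _ ≤ ∫⁻ _ in A \ B, K ∂μ :=
      setLIntegral_mono' (hA.diff hB) fun a ha => le_iSup₂ (f := fun a _ => f a) a ha
    _ = K * μ (A \ B) := setLIntegral_const _ _
    _ ≤ K * μ (B \ A) := by gcongr
    _ = ∫⁻ _ in B \ A, K ∂μ := (setLIntegral_const _ _).symm
    _ ≤ ∫⁻ b in B \ A, f b ∂μ :=
      setLIntegral_mono' (hB.diff hA) fun b hb => iSup₂_le fun a ha => hf a ha b hb
    _ = _ := (withDensity_apply _ (hB.diff hA)).symm
  rw [← measure_inter_add_sdiff A hB, ← measure_inter_add_sdiff B hA, Set.inter_comm B A]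
  gcongr

lemma lt_of_mem_Ioc_of_mem_Ioc_diff {α : Type*} [LinearOrder α] {a b a' b' t s : α}
    (ha : a ≤ a') (ht : t ∈ Set.Ioc a b) (hs : s ∈ Set.Ioc a' b' \ Set.Ioc a b) : t < s := by
  obtain ⟨⟨has, -⟩, hs⟩ := hs
  exact ht.2.trans_lt <| not_le.1 fun hsb => hs ⟨ha.trans_lt has, hsb⟩

lemma measurableSet_slab {d : ℕ} (σ : ℝ) (x δ : Fin d → ℝ) (a b : ℝ) :
    MeasurableSet (slab σ x δ a b) := by
  have : Measurable fun z : Fin d → ℝ => dotp δ (z - x) := by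
    unfold dotp
    fun_prop
  exact (measurable_coe_real_ereal.comp (this.div_const _)) measurableSet_Ioc

lemma dotp_lt_of_mem_slab_of_mem_slab_diff {d : ℕ} {σ : ℝ} (hσ : 0 ≤ σ) {x δ z w : Fin d → ℝ}
    {a b a' b' : ℝ} (hb : b' ≤ b) (hz : z ∈ slab σ x δ a b)
    (hw : w ∈ slab σ x δ a' b' \ slab σ x δ a b) : dotp δ (z - x) < dotp δ (w - x) := by
  have hlo : PhiInvE (1 - b) ≤ PhiInvE (1 - b') := monotone_PhiInvE (by linarith)
  have hdiv : Monotone (· / (σ * l2norm δ)) :=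
    fun _ _ h => div_le_div_of_nonneg_right h (mul_nonneg hσ (sqrt_nonneg _))
  exact hdiv.reflect_lt (EReal.coe_lt_coe_iff.1 (lt_of_mem_Ioc_of_mem_Ioc_diff hlo hz hw))

theorem slab_ratio_comparison_general
    {d : ℕ} (σ : ℝ) (hσ : 0 < σ)
    (x δ : Fin d → ℝ)
    (q1 q2 : ℝ)
    (n : ℕ) (e1 e2 : Fin n → ℝ)
    (C' : Set (Fin d → ℝ))
    (hC' : C' = slab σ x δ q1 q2 \ ⋃ i, slab σ x δ (e1 i) (e2 i))
    (rX rY : ℝ → ℝ → ℝ)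
    (hrX : ∀ a b, rX a b = (gaussianVec x σ (C' ∩ slab σ x δ a b)).toReal)
    (hrY : ∀ a b, rY a b = (gaussianVec (x + δ) σ (C' ∩ slab σ x δ a b)).toReal)
    (q1k q2k q1l q2l : ℝ)
    (hx : rX q1k q2k ≤ rX q1l q2l) (h2 : q2l ≤ q2k) :
    rY q1k q2k ≤ rY q1l q2l := by
  have hC'm : MeasurableSet C' :=
    hC' ▸ (measurableSet_slab ..).diff (.iUnion fun i => measurableSet_slab ..)
  rw [hrX, hrX, ENNReal.toReal_le_toReal (measure_ne_top _ _) (measure_ne_top _ _)] at hx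
  rw [hrY, hrY]
  refine ENNReal.toReal_mono (measure_ne_top _ _) ?_
  rw [gaussianVec_add_eq_withDensity x δ hσ]
  refine withDensity_apply_le_of_separated
    (hC'm.inter (measurableSet_slab ..)) (hC'm.inter (measurableSet_slab ..)) hx ?_
  rintro z ⟨⟨-, hzk⟩, -⟩ w ⟨⟨hwC, hwl⟩, hwk⟩
  have hzw := dotp_lt_of_mem_slab_of_mem_slab_diff hσ.le h2 hzk ⟨hwl, fun h => hwk ⟨hwC, h⟩⟩
  gcongr

/-- Lemma 5 of the paper (slab comparison): in the slab setting, with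
C′ = C(q₁,q₂) \ ⋃ᵢ C(q₁ⁱ,q₂ⁱ), rₓ(a,b) = Pr(X ∈ C′ ∩ C(a,b)) and
r_y(a,b) = Pr(Y ∈ C′ ∩ C(a,b)): if rₓ(q₁ᵏ,q₂ᵏ) ≤ rₓ(q₁ˡ,q₂ˡ) and q₂ᵏ ≥ q₂ˡ,
then r_y(q₁ᵏ,q₂ᵏ) ≤ r_y(q₁ˡ,q₂ˡ). -/
theorem slab_ratio_comparison
    {d : ℕ} (hd : 1 ≤ d) (σ : ℝ) (hσ : 0 < σ)
    (x δ : Fin d → ℝ) (hδ : δ ≠ 0)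
    (q1 q2 : ℝ) (hq1 : 0 ≤ q1) (hq12 : q1 < q2) (hq2 : q2 ≤ 1)
    (n : ℕ) (e1 e2 : Fin n → ℝ)
    (he : ∀ i, q1 ≤ e1 i ∧ e1 i ≤ e2 i ∧ e2 i ≤ q2)
    (C' : Set (Fin d → ℝ))
    (hC' : C' = slab σ x δ q1 q2 \ ⋃ i, slab σ x δ (e1 i) (e2 i))
    (rX rY : ℝ → ℝ → ℝ)
    (hrX : ∀ a b, rX a b = (gaussianVec x σ (C' ∩ slab σ x δ a b)).toReal)
    (hrY : ∀ a b, rY a b = (gaussianVec (x + δ) σ (C' ∩ slab σ x δ a b)).toReal)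
    (q1k q2k q1l q2l : ℝ)
    (hkk : q1 ≤ q1k ∧ q1k ≤ q2k ∧ q2k ≤ q2)
    (hll : q1 ≤ q1l ∧ q1l ≤ q2l ∧ q2l ≤ q2)
    (hx : rX q1k q2k ≤ rX q1l q2l) (h2 : q2l ≤ q2k) :
    rY q1k q2k ≤ rY q1l q2l :=
  slab_ratio_comparison_general σ hσ x δ q1 q2 n e1 e2 C' hC' rX rY hrX hrY q1k q2k q1l q2l hx h2
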